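/- Let E_1 and E_2 be reproducing kernel Hilbert C*-modules over a C*-algebra A on a set S, with kernel elements k^1_s and k^2_s respectively, and let f : S → A be a left multiplier of E_1 into E_2, i.e. the pointwise product f·h lies in E_2 for every h ∈ E_1. Then the multiplication map M_f : E_1 → E_2, M_f(h) = f·h, is an adjointable operator, and its adjoint satisfies M_f*(k^2_s) = k^1_s · f(s)* for all s ∈ S. -/

import Mathlib

/-!
The multiplication map `M` is linear, and since norm convergence in a reproducing kernel module
implies pointwise convergence, its graph is closed, so `M` is bounded. The `y ∈ E₂` for which
`x ↦ ⟪y, M x⟫` is of the form `⟪w, ·⟫` form a submodule; it is closed because `w ↦ ⟪w, ·⟫` is an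
isometry on the complete module `E₁`. It contains every `k² s <• a`, with `w = k¹ s <• f(s)* <• a`,
so by density of the span of these elements it is all of `E₂`. Uniqueness of `w` gives the adjoint.
-/

open scoped RightActions

/-- The Hilbert C*-module class `CStarModule` as it stood in Mathlib of December 2024: a
right `A`-module (via `SMul Aᵐᵒᵖ E`) with an `A`-valued inner product, linear in the second
argument for the right action. (Mathlib's `CStarModule` is now a left-module notion.) -/
class RightCStarModule (A E : Type*) [NonUnitalSemiring A] [StarRing A] [Module ℂ A]
    [AddCommGroup E] [Module ℂ E] [PartialOrder A] [SMul Aᵐᵒᵖ E] [Norm A] [Norm E]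
    extends Inner A E where
  inner_add_right {x} {y} {z} : inner x (y + z) = inner x y + inner x z
  inner_self_nonneg {x} : 0 ≤ inner x x
  inner_self {x} : inner x x = 0 ↔ x = 0
  inner_op_smul_right {a : A} {x y : E} : inner x (y <• a) = inner x y * a
  inner_smul_right_complex {z : ℂ} {x} {y} : inner x (z • y) = z • inner x y
  star_inner x y : star (inner x y) = inner y x
  norm_eq_sqrt_norm_inner_self x : ‖x‖ = √‖inner x x‖

/-- A *reproducing kernel Hilbert C*-module* (RKHC*M) over the C*-algebra `A` on the set `S`:
a Hilbert C*-module `E` over `A` realized (injectively) as a right `A`-submodule of the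
`A`-valued functions on `S` via `toFun`, together with kernel elements `k s` such that
evaluation at `s` is given by `f ↦ ⟪k s, f⟫`, and such that the `A`-linear span of the
`k s` is dense in `E`. -/
structure RKHCM (A : Type*) (S : Type*) (E : Type*)
    [CStarAlgebra A] [PartialOrder A] [StarOrderedRing A]
    [NormedAddCommGroup E] [NormedSpace ℂ E] [SMul Aᵐᵒᵖ E] [RightCStarModule A E] where
  toFun : E → S → A
  injective : Function.Injective toFun
  k : S → E
  eval_eq : ∀ (f : E) (s : S), toFun f s = inner A (k s) f
  dense_span : Dense
    ((Submodule.span ℂ (Set.range fun p : S × A => k p.1 <• p.2) : Submodule ℂ E) : Set E)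

variable {A : Type*} [CStarAlgebra A] [PartialOrder A] [StarOrderedRing A]
variable {S : Type*} [Nonempty S]
variable {E₁ : Type*} [NormedAddCommGroup E₁] [NormedSpace ℂ E₁] [SMul Aᵐᵒᵖ E₁]
  [RightCStarModule A E₁] [CompleteSpace E₁]
variable {E₂ : Type*} [NormedAddCommGroup E₂] [NormedSpace ℂ E₂] [SMul Aᵐᵒᵖ E₂]
  [RightCStarModule A E₂] [CompleteSpace E₂]



namespace CStarModule

variable {B E : Type*} [NonUnitalCStarAlgebra B] [PartialOrder B] [StarOrderedRing B]
  [NormedAddCommGroup E] [NormedSpace ℂ E] [SMul B E] [CStarModule B E]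

lemma innerSL_apply_norm (x : E) : ‖(innerSL x : E →L[ℂ] B)‖ = ‖x‖ := by
  refine le_antisymm (ContinuousLinearMap.opNorm_le_bound _ (norm_nonneg x)
    fun y => norm_inner_le E) ?_
  rcases eq_or_ne x 0 with rfl | hx
  · simp
  refine le_of_mul_le_mul_right ?_ (norm_pos_iff.mpr hx)
  have h := ContinuousLinearMap.le_opNorm (innerSL x : E →L[ℂ] B) x
  rwa [innerSL_apply, ← norm_sq_eq B, sq] at h

lemma isometry_innerSL : Isometry (innerSL : E →L⋆[ℂ] E →L[ℂ] B) :=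
  AddMonoidHomClass.isometry_of_norm _ innerSL_apply_norm

lemma isClosed_range_innerSL [CompleteSpace E] :
    IsClosed (Set.range (innerSL : E →L⋆[ℂ] E →L[ℂ] B)) :=
  (isometry_innerSL.isUniformInducing.isComplete_range).isClosed

variable {F : Type*} [NormedAddCommGroup F] [NormedSpace ℂ F] [SMul B F] [CStarModule B F]

variable (B) in
/-- The `y` for which `x ↦ ⟪y, T x⟫` is of the form `⟪w, ·⟫`. -/
noncomputable def adjointDomain (T : E →L[ℂ] F) : Submodule ℂ F :=
  (innerSL : E →L⋆[ℂ] E →L[ℂ] B).range.comap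
    (((ContinuousLinearMap.compL ℂ E F B).flip T).comp innerSL).toLinearMap

lemma mem_adjointDomain {T : E →L[ℂ] F} {y : F} :
    y ∈ adjointDomain B T ↔ ∃ w : E, ∀ x, inner B w x = inner B y (T x) := by
  simp [adjointDomain, ContinuousLinearMap.ext_iff, innerSL_apply]

lemma isClosed_adjointDomain [CompleteSpace E] (T : E →L[ℂ] F) :
    IsClosed (adjointDomain B T : Set F) :=
  isClosed_range_innerSL.preimage (ContinuousLinearMap.continuous _)

lemma adjointDomain_eq_top [CompleteSpace E] {T : E →L[ℂ] F} {s : Set F}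
    (hs : Dense (Submodule.span ℂ s : Set F)) (hsT : s ⊆ adjointDomain B T) :
    adjointDomain B T = ⊤ := by
  rw [eq_top_iff, ← SetLike.coe_subset_coe, Submodule.top_coe, ← hs.closure_eq]
  exact (isClosed_adjointDomain T).closure_subset_iff.mpr (Submodule.span_le.mpr hsT)

end CStarModule

namespace RightCStarModule

variable {A E : Type*} [CStarAlgebra A] [PartialOrder A]
  [NormedAddCommGroup E] [NormedSpace ℂ E] [SMul Aᵐᵒᵖ E] [RightCStarModule A E]

/-- Read as a left action of `Aᵐᵒᵖ`, the right action of `A` makes `E` a Hilbert C⋆-module in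
Mathlib's sense, which supplies Cauchy–Schwarz and the continuous sesquilinear `innerSL`. -/
instance toCStarModuleMulOpposite : CStarModule Aᵐᵒᵖ E where
  inner x y := MulOpposite.op (inner A x y)
  inner_add_right := by simp [inner_add_right]
  inner_self_nonneg := MulOpposite.op_nonneg.mpr inner_self_nonneg
  inner_self := MulOpposite.op_eq_zero_iff _ |>.trans inner_self
  inner_op_smul_right {a x y} := by
    rw [← MulOpposite.op_unop a, ← MulOpposite.op_mul, ← inner_op_smul_right]
  inner_smul_right_complex := by simp [inner_smul_right_complex]
  star_inner x y := by rw [← MulOpposite.op_star, star_inner]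
  norm_eq_sqrt_norm_inner_self x := by
    rw [MulOpposite.norm_op, norm_eq_sqrt_norm_inner_self (A := A)]

lemma inner_mulOpposite (x y : E) : inner Aᵐᵒᵖ x y = MulOpposite.op (inner A x y) := rfl

lemma inner_op_smul_left {a : A} {x y : E} : inner A (x <• a) y = star a * inner A x y := by
  rw [← star_inner y, inner_op_smul_right, star_mul, star_inner]

end RightCStarModule

namespace RKHCM

open RightCStarModule

variable {A S E : Type*} [CStarAlgebra A] [PartialOrder A] [StarOrderedRing A]
  [NormedAddCommGroup E] [NormedSpace ℂ E] [SMul Aᵐᵒᵖ E] [RightCStarModule A E]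

lemma toFun_add (R : RKHCM A S E) (x y : E) : R.toFun (x + y) = R.toFun x + R.toFun y := by
  ext s
  simp only [R.eval_eq, RightCStarModule.inner_add_right, Pi.add_apply]

lemma toFun_smul (R : RKHCM A S E) (c : ℂ) (x : E) : R.toFun (c • x) = c • R.toFun x := by
  ext s
  simp only [R.eval_eq, inner_smul_right_complex, Pi.smul_apply]

lemma continuous_toFun_apply (R : RKHCM A S E) (s : S) : Continuous fun x => R.toFun x s := by
  simp only [R.eval_eq]
  exact MulOpposite.continuous_unop.comp (CStarModule.innerSL (R.k s) : E →L[ℂ] Aᵐᵒᵖ).continuous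

variable {F : Type*} [NormedAddCommGroup F] [NormedSpace ℂ F] [SMul Aᵐᵒᵖ F] [RightCStarModule A F]

def IsMultiplicationOperator (R₁ : RKHCM A S E) (R₂ : RKHCM A S F) (f : S → A) (M : E → F) :
    Prop :=
  ∀ h s, R₂.toFun (M h) s = f s * R₁.toFun h s

namespace IsMultiplicationOperator

variable {R₁ : RKHCM A S E} {R₂ : RKHCM A S F} {f : S → A} {M : E → F}

def toLinearMap (hM : IsMultiplicationOperator R₁ R₂ f M) : E →ₗ[ℂ] F where
  toFun := M
  map_add' x y := R₂.injective <| by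
    ext s
    simp only [R₂.toFun_add, Pi.add_apply, hM _ s, R₁.toFun_add, mul_add]
  map_smul' c x := R₂.injective <| by
    ext s
    simp only [R₂.toFun_smul, Pi.smul_apply, hM _ s, R₁.toFun_smul, mul_smul_comm,
      RingHom.id_apply]

lemma exists_continuousLinearMap_coe_eq [CompleteSpace E] [CompleteSpace F]
    (hM : IsMultiplicationOperator R₁ R₂ f M) : ∃ T : E →L[ℂ] F, ⇑T = M := by
  refine ⟨⟨hM.toLinearMap, hM.toLinearMap.continuous_of_seq_closed_graph ?_⟩, rfl⟩
  intro u x y hux huy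
  refine R₂.injective (funext fun s => tendsto_nhds_unique
    ((R₂.continuous_toFun_apply s).continuousAt.tendsto.comp huy) ?_)
  simp only [toLinearMap, LinearMap.coe_mk, AddHom.coe_mk, Function.comp_def, hM _ s]
  exact ((R₁.continuous_toFun_apply s).const_mul (f s) |>.tendsto x).comp hux

lemma inner_kernel_smul_star (hM : IsMultiplicationOperator R₁ R₂ f M) (s : S) (x : E) :
    inner A (R₁.k s <• star (f s)) x = inner A (R₂.k s) (M x) := by
  rw [inner_op_smul_left, star_star, ← R₁.eval_eq, ← R₂.eval_eq, hM]

lemma kernel_smul_mem_adjointDomain {T : E →L[ℂ] F} (hT : IsMultiplicationOperator R₁ R₂ f T)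
    (s : S) (a : A) : R₂.k s <• a ∈ CStarModule.adjointDomain Aᵐᵒᵖ T := by
  refine CStarModule.mem_adjointDomain.mpr ⟨(R₁.k s <• star (f s)) <• a, fun x => ?_⟩
  rw [inner_mulOpposite, inner_mulOpposite, inner_op_smul_left, hT.inner_kernel_smul_star,
    inner_op_smul_left]

end IsMultiplicationOperator

end RKHCM

/-- if `f : S → A` is a left multiplier of the reproducing kernel
Hilbert C*-module `E₁` into `E₂`, i.e. the multiplication operator `M : E₁ → E₂` realizes
`(M h)(s) = f(s) h(s)` pointwise, then `M` is adjointable, and `M* (k² s) = k¹ s <• f(s)*`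
for all `s ∈ S`. -/
theorem multiplication_operator_adjointable
    (R₁ : RKHCM A S E₁) (R₂ : RKHCM A S E₂) (f : S → A)
    (M : E₁ → E₂) (hM : ∀ (h : E₁) (s : S), R₂.toFun (M h) s = f s * R₁.toFun h s) :
    ∃ M' : E₂ → E₁,
      (∀ (x : E₁) (y : E₂), (inner A (M' y) x : A) = inner A y (M x)) ∧
      (∀ s : S, M' (R₂.k s) = R₁.k s <• star (f s)) := by
  replace hM : R₁.IsMultiplicationOperator R₂ f M := hM
  obtain ⟨T, rfl⟩ := hM.exists_continuousLinearMap_coe_eq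
  have hdom : CStarModule.adjointDomain Aᵐᵒᵖ T = ⊤ :=
    CStarModule.adjointDomain_eq_top R₂.dense_span
      (Set.range_subset_iff.mpr fun p => hM.kernel_smul_mem_adjointDomain p.1 p.2)
  choose M' hM' using fun y =>
    CStarModule.mem_adjointDomain.mp (hdom ▸ Submodule.mem_top (x := y))
  refine ⟨M', fun x y => MulOpposite.op_injective (hM' y x), fun s => ?_⟩
  refine (CStarModule.isometry_innerSL (B := Aᵐᵒᵖ)).injective (ContinuousLinearMap.ext fun x => ?_)
  rw [CStarModule.innerSL_apply, CStarModule.innerSL_apply, hM',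
    RightCStarModule.inner_mulOpposite, RightCStarModule.inner_mulOpposite,
    hM.inner_kernel_smul_star]
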